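/- Let {(W_{ij})}_{1≤i,j≤n} be square-integrable real random variables with W_{ii} = 0, W_{ij} = W_{ji}, such that W_{ij} depends only on independent random variables Z_i and Z_j and is 'clean': E[W_{ij} | Z_i] = 0 almost surely for all i ≠ j. Then E[(Σ_{i≠j} W_{ij})²] = 2 Σ_{i≠j} E[W_{ij}²], i.e., all cross terms E[W_{ij} W_{kl}] with {i,j} ≠ {k,l} vanish. -/

import Mathlib

/-!
Expanding the square gives `∑ E[W_ij W_kl]`; the pairs with `{k, l} = {i, j}` contribute
`2 ∑ E[W_ij²]`. In every other term with `i ≠ j`, `k ≠ l`, one index, say `l` (using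
`W_kl = W_lk`), differs from the other three. As `Z_l` is independent of `(Z_i, Z_j, Z_k)`,
it can be integrated out first, and the inner integral `∫ f_kl(Z_k, y) dP_{Z_l}(y)` is a
version of `E[W_kl | Z_k]`, which vanishes by cleanness.
-/

open MeasureTheory ProbabilityTheory

namespace ProbabilityTheory.IndepFun

variable {Ω α β : Type*} [MeasurableSpace Ω] [MeasurableSpace α] [MeasurableSpace β]
  {μ : Measure Ω} [IsFiniteMeasure μ] {X : Ω → α} {Y : Ω → β} {F : α → β → ℝ}

theorem integrable_uncurry_prod_map (hXY : IndepFun X Y μ) (hX : Measurable X)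
    (hY : Measurable Y) (hF : Measurable (Function.uncurry F))
    (hint : Integrable (fun ω => F (X ω) (Y ω)) μ) :
    Integrable (Function.uncurry F) ((μ.map X).prod (μ.map Y)) := by
  rw [← (indepFun_iff_map_prod_eq_prod_map_map hX.aemeasurable hY.aemeasurable).mp hXY]
  exact (integrable_map_measure hF.aestronglyMeasurable
    (hX.aemeasurable.prodMk hY.aemeasurable)).mpr hint

theorem integral_comp_eq_integral_integral_map (hXY : IndepFun X Y μ) (hX : Measurable X)
    (hY : Measurable Y) (hF : Measurable (Function.uncurry F))
    (hint : Integrable (fun ω => F (X ω) (Y ω)) μ) :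
    ∫ ω, F (X ω) (Y ω) ∂μ = ∫ ω, ∫ y, F (X ω) y ∂(μ.map Y) ∂μ := by
  calc ∫ ω, F (X ω) (Y ω) ∂μ
      = ∫ p, Function.uncurry F p ∂((μ.map X).prod (μ.map Y)) := by
        rw [← (indepFun_iff_map_prod_eq_prod_map_map hX.aemeasurable hY.aemeasurable).mp hXY,
          integral_map (hX.aemeasurable.prodMk hY.aemeasurable) hF.aestronglyMeasurable]
        rfl
    _ = ∫ x, ∫ y, F x y ∂(μ.map Y) ∂(μ.map X) :=
        integral_prod _ (hXY.integrable_uncurry_prod_map hX hY hF hint)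
    _ = ∫ ω, ∫ y, F (X ω) y ∂(μ.map Y) ∂μ :=
        integral_map hX.aemeasurable
          hF.stronglyMeasurable.integral_prod_right'.aestronglyMeasurable

theorem integrable_integral_map (hXY : IndepFun X Y μ) (hX : Measurable X)
    (hY : Measurable Y) (hF : Measurable (Function.uncurry F))
    (hint : Integrable (fun ω => F (X ω) (Y ω)) μ) :
    Integrable (fun ω => ∫ y, F (X ω) y ∂(μ.map Y)) μ :=
  (integrable_map_measure hF.stronglyMeasurable.integral_prod_right'.aestronglyMeasurable
    hX.aemeasurable).mp (hXY.integrable_uncurry_prod_map hX hY hF hint).integral_prod_left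

theorem condExp_comap_ae_eq_integral_map (hXY : IndepFun X Y μ) (hX : Measurable X)
    (hY : Measurable Y) (hF : Measurable (Function.uncurry F))
    (hint : Integrable (fun ω => F (X ω) (Y ω)) μ) :
    μ[fun ω => F (X ω) (Y ω) | MeasurableSpace.comap X inferInstance] =ᵐ[μ]
      fun ω => ∫ y, F (X ω) y ∂(μ.map Y) := by
  refine (ae_eq_condExp_of_forall_setIntegral_eq hX.comap_le hint
    (fun s _ _ => (hXY.integrable_integral_map hX hY hF hint).integrableOn) ?_ ?_).symm
  · rintro _ ⟨A, hA, rfl⟩ -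
    have hFA : Measurable (Function.uncurry fun x y => A.indicator (F · y) x) := by
      convert hF.indicator (hA.prod MeasurableSet.univ) using 1
      ext ⟨x, y⟩
      by_cases hx : x ∈ A <;> simp [hx]
    have hintA : Integrable (fun ω => A.indicator (F · (Y ω)) (X ω)) μ :=
      (hint.indicator (hX hA) :)
    symm
    calc ∫ ω in X ⁻¹' A, F (X ω) (Y ω) ∂μ
        = ∫ ω, A.indicator (F · (Y ω)) (X ω) ∂μ := (integral_indicator (hX hA)).symm
      _ = ∫ ω, ∫ y, A.indicator (F · y) (X ω) ∂(μ.map Y) ∂μ :=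
          hXY.integral_comp_eq_integral_integral_map hX hY hFA hintA
      _ = ∫ ω, A.indicator (fun x => ∫ y, F x y ∂(μ.map Y)) (X ω) ∂μ := by
          congr 1 with ω
          by_cases hω : X ω ∈ A <;> simp [hω]
      _ = ∫ ω in X ⁻¹' A, ∫ y, F (X ω) y ∂(μ.map Y) ∂μ := integral_indicator (hX hA)
  · exact (hF.stronglyMeasurable.integral_prod_right'.comp_measurable
      (Measurable.of_comap_le le_rfl)).aestronglyMeasurable

theorem integral_mul_eq_zero_of_ae_integral_eq_zero (hXY : IndepFun X Y μ) (hX : Measurable X)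
    (hY : Measurable Y) {g : α → ℝ} (hg : Measurable g) (hF : Measurable (Function.uncurry F))
    (hint : Integrable (fun ω => g (X ω) * F (X ω) (Y ω)) μ)
    (hzero : ∀ᵐ ω ∂μ, ∫ y, F (X ω) y ∂(μ.map Y) = 0) :
    ∫ ω, g (X ω) * F (X ω) (Y ω) ∂μ = 0 := by
  rw [hXY.integral_comp_eq_integral_integral_map hX hY (F := fun x y => g x * F x y)
    ((hg.comp measurable_fst).mul hF) hint]
  refine integral_eq_zero_of_ae ?_
  filter_upwards [hzero] with ω hω
  rw [integral_const_mul, hω, mul_zero, Pi.zero_apply]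

end ProbabilityTheory.IndepFun

namespace ProbabilityTheory.iIndepFun

variable {Ω ι E : Type*} [MeasurableSpace Ω] [MeasurableSpace E] {μ : Measure Ω}
  [IsFiniteMeasure μ] {Z : ι → Ω → E}

theorem integral_mul_eq_zero_of_condExp_eq_zero (hZ : ∀ i, Measurable (Z i))
    (hindep : iIndepFun Z μ) {g h : E → E → ℝ} (hg : Measurable (Function.uncurry g))
    (hh : Measurable (Function.uncurry h)) {i j k l : ι} (hli : l ≠ i) (hlj : l ≠ j)
    (hlk : l ≠ k) (hint : Integrable (fun ω => g (Z i ω) (Z j ω) * h (Z k ω) (Z l ω)) μ)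
    (hhint : Integrable (fun ω => h (Z k ω) (Z l ω)) μ)
    (hclean : μ[fun ω => h (Z k ω) (Z l ω) | MeasurableSpace.comap (Z k) inferInstance]
      =ᵐ[μ] 0) :
    ∫ ω, g (Z i ω) (Z j ω) * h (Z k ω) (Z l ω) ∂μ = 0 := by
  classical
  have hdisj : Disjoint ({i, j, k} : Finset ι) {l} := by simp [hli, hlj, hlk]
  have hφ : Measurable fun v : ({i, j, k} : Finset ι) → E =>
      (v ⟨i, by simp⟩, v ⟨j, by simp⟩, v ⟨k, by simp⟩) := by fun_prop
  have hψ : Measurable fun v : ({l} : Finset ι) → E => v ⟨l, by simp⟩ := by fun_prop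
  have hUl : IndepFun (fun ω => (Z i ω, Z j ω, Z k ω)) (Z l) μ :=
    (hindep.indepFun_finset _ _ hdisj hZ).comp hφ hψ
  have hzero : ∀ᵐ ω ∂μ, ∫ y, h (Z k ω) y ∂(μ.map (Z l)) = 0 :=
    ((hindep.indepFun hlk.symm).condExp_comap_ae_eq_integral_map (hZ k) (hZ l) hh
      hhint).symm.trans hclean
  exact hUl.integral_mul_eq_zero_of_ae_integral_eq_zero (g := fun u => g u.1 u.2.1)
    (F := fun u y => h u.2.2 y) (by fun_prop) (hZ l) (by fun_prop) (by fun_prop) hint hzero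

end ProbabilityTheory.iIndepFun

theorem MeasureTheory.integral_sq_sum {Ω ι : Type*} [MeasurableSpace Ω] {μ : Measure Ω}
    (s : Finset ι) {X : ι → Ω → ℝ}
    (hX : ∀ a ∈ s, ∀ b ∈ s, Integrable (fun ω => X a ω * X b ω) μ) :
    ∫ ω, (∑ a ∈ s, X a ω) ^ 2 ∂μ =
      ∑ a ∈ s, ∑ b ∈ s, ∫ ω, X a ω * X b ω ∂μ := by
  simp_rw [sq, Finset.sum_mul_sum]
  rw [integral_finsetSum _ fun a ha => integrable_finsetSum _ fun b hb => hX a ha b hb]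
  exact Finset.sum_congr rfl fun a ha => integral_finsetSum _ fun b hb => hX a ha b hb

theorem Fintype.sum_sum_eq_two_mul_of_symm {ι R : Type*} [Fintype ι] [DecidableEq ι]
    [NonAssocSemiring R] {t : ι → ι → R} {i j : ι} (hij : i ≠ j)
    (hsymm : ∀ k l, t k l = t l k) (hi : t i i = 0) (hj : t j j = 0)
    (hvanish : ∀ k l, l ≠ i → l ≠ j → t k l = 0) :
    ∑ k, ∑ l, t k l = 2 * t i j := by
  have hrow : ∀ k, ∑ l, t k l = t k i + t k j := fun k => by
    rw [← Finset.sum_pair hij]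
    refine (Finset.sum_subset (Finset.subset_univ _) fun l _ hl => hvanish k l ?_ ?_).symm <;>
      simp_all
  calc ∑ k, ∑ l, t k l = ∑ k, t i k + ∑ k, t j k := by
        rw [Finset.sum_congr rfl fun k _ => hrow k, Finset.sum_add_distrib]
        congr 1 <;> exact Finset.sum_congr rfl fun k _ => hsymm k _
    _ = 2 * t i j := by rw [hrow i, hrow j, hi, hj, hsymm j i, zero_add, add_zero, two_mul]

theorem clean_degenerate_second_moment {Ω E : Type*} [MeasurableSpace Ω] [MeasurableSpace E]
    (μ : Measure Ω) [IsProbabilityMeasure μ] (n : ℕ)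
    (Z : Fin n → Ω → E) (hZ : ∀ i, Measurable (Z i))
    (hindep : iIndepFun Z μ)
    (f : Fin n → Fin n → E → E → ℝ)
    (hfm : ∀ i j, Measurable (Function.uncurry (f i j)))
    (hdiag : ∀ i a b, f i i a b = 0)
    (hsymm : ∀ i j a b, f i j a b = f j i b a)
    (hL2 : ∀ i j, MemLp (fun ω => f i j (Z i ω) (Z j ω)) 2 μ)
    (hclean : ∀ i j, i ≠ j →
      μ[(fun ω => f i j (Z i ω) (Z j ω)) |
        MeasurableSpace.comap (Z i) inferInstance] =ᵐ[μ] 0) :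
    ∫ ω, (∑ i, ∑ j, f i j (Z i ω) (Z j ω)) ^ 2 ∂μ =
      2 * ∑ i, ∑ j, ∫ ω, (f i j (Z i ω) (Z j ω)) ^ 2 ∂μ := by
  have hint : ∀ i j k l, Integrable
      (fun ω => f i j (Z i ω) (Z j ω) * f k l (Z k ω) (Z l ω)) μ :=
    fun i j k l => (hL2 i j).integrable_mul (hL2 k l)
  have hrow : ∀ i j, ∑ k, ∑ l, ∫ ω, f i j (Z i ω) (Z j ω) * f k l (Z k ω) (Z l ω) ∂μ
      = 2 * ∫ ω, (f i j (Z i ω) (Z j ω)) ^ 2 ∂μ := by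
    intro i j
    rcases eq_or_ne i j with rfl | hij
    · simp [hdiag]
    have hvanish : ∀ k l, l ≠ i → l ≠ j →
        ∫ ω, f i j (Z i ω) (Z j ω) * f k l (Z k ω) (Z l ω) ∂μ = 0 := by
      intro k l hli hlj
      rcases eq_or_ne k l with rfl | hkl
      · simp [hdiag]
      exact hindep.integral_mul_eq_zero_of_condExp_eq_zero hZ (hfm i j) (hfm k l) hli hlj
        hkl.symm (hint i j k l) ((hL2 k l).integrable one_le_two) (hclean k l hkl)
    simp_rw [sq]
    exact Fintype.sum_sum_eq_two_mul_of_symm hij (fun k l => by simp_rw [hsymm k l])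
      (by simp [hdiag]) (by simp [hdiag]) hvanish
  simp_rw [← Fintype.sum_prod_type']
  rw [integral_sq_sum _ fun p _ q _ => hint p.1 p.2 q.1 q.2, Finset.mul_sum]
  exact Finset.sum_congr rfl fun p _ => by rw [Fintype.sum_prod_type]; exact hrow p.1 p.2
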